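/- For every t ∈ ℕ, the curve γ_t: [0,1] → S^1 × S^1 ⊂ ℝ^4, γ_t(s) = (cos 2π(t+1)s, sin 2π(t+1)s, cos 2πs, sin 2πs), is a t-design curve on the Clifford torus: for every polynomial f on ℝ^4 of degree at most t, (1/ℓ(γ_t)) ∫_0^1 f(γ_t(s)) |γ_t'(s)| ds equals the average of f over S^1 × S^1 with respect to the product of arc-length measures. Moreover ℓ(γ_t) = 2π√((t+1)^2 + 1). -/

import Mathlib

/-!
Expanding `cos` and `sin` into exponentials, a polynomial of degree at most `t` in
`(cos θ₁, sin θ₁, cos θ₂, sin θ₂)` is a linear combination of modes `exp (i (m₁ θ₁ + m₂ θ₂))`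
with `|m₂| ≤ t`. Along `θ = (2π(t+1)s, 2πs)`, `s ∈ [0, 1]`, such a mode integrates to `1` if
`(t+1) m₁ + m₂ = 0` and to `0` otherwise; since `|m₂| < t + 1`, this happens only for `m = 0`,
which is also the only mode with nonzero torus average. The curve has constant speed
`2π√((t+1)² + 1)`, so the arc-length weight cancels in the normalized line integral.
-/

open Real MvPolynomial

/-- The curve `γ_t(s) = (cos 2π(t+1)s, sin 2π(t+1)s, cos 2πs, sin 2πs)` on the Clifford
torus `S¹ × S¹ ⊂ ℝ⁴`. -/
noncomputable def torusCurve (t : ℕ) (s : ℝ) : EuclideanSpace ℝ (Fin 4) :=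
  (WithLp.equiv 2 (Fin 4 → ℝ)).symm
    ![Real.cos (2 * π * (t + 1) * s), Real.sin (2 * π * (t + 1) * s),
      Real.cos (2 * π * s), Real.sin (2 * π * s)]

open Complex intervalIntegral

noncomputable def fourierMode (m : ℤ × ℤ) (θ : ℝ × ℝ) : ℂ :=
  exp ((m.1 * θ.1 + m.2 * θ.2) * I)

noncomputable def trigPolySndDegreeLE (N : ℕ) : Submodule ℂ (ℝ × ℝ → ℂ) :=
  Submodule.span ℂ (fourierMode '' {m | |m.2| ≤ N})

lemma fourierMode_zero : fourierMode 0 = 1 := by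
  ext θ
  simp [fourierMode]

lemma fourierMode_add (m m' : ℤ × ℤ) :
    fourierMode (m + m') = fourierMode m * fourierMode m' := by
  ext θ
  simp only [fourierMode, Pi.mul_apply, Prod.fst_add, Prod.snd_add, Int.cast_add,
    ← Complex.exp_add]
  ring_nf

@[fun_prop]
lemma continuous_fourierMode (m : ℤ × ℤ) : Continuous (fourierMode m) := by
  unfold fourierMode
  fun_prop

lemma fourierMode_mem_trigPolySndDegreeLE {N : ℕ} {m : ℤ × ℤ} (hm : |m.2| ≤ N) :
    fourierMode m ∈ trigPolySndDegreeLE N :=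
  Submodule.subset_span ⟨m, hm, rfl⟩

lemma trigPolySndDegreeLE_mono : Monotone trigPolySndDegreeLE := fun N M h =>
  Submodule.span_mono <| Set.image_mono fun m (hm : |m.2| ≤ N) =>
    show |m.2| ≤ M from hm.trans (by exact_mod_cast h)

lemma trigPolySndDegreeLE_mul_le (N M : ℕ) :
    trigPolySndDegreeLE N * trigPolySndDegreeLE M ≤ trigPolySndDegreeLE (N + M) := by
  rw [trigPolySndDegreeLE, trigPolySndDegreeLE, Submodule.span_mul_span, Submodule.span_le]
  rintro _ ⟨_, ⟨m, hm, rfl⟩, _, ⟨m', hm', rfl⟩, rfl⟩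
  change fourierMode m * fourierMode m' ∈ _
  rw [← fourierMode_add]
  refine fourierMode_mem_trigPolySndDegreeLE ?_
  push_cast
  exact (abs_add_le _ _).trans (add_le_add hm hm')

section Membership

variable {N M : ℕ} {F G : ℝ × ℝ → ℂ}

lemma mul_mem_trigPolySndDegreeLE (hF : F ∈ trigPolySndDegreeLE N)
    (hG : G ∈ trigPolySndDegreeLE M) : F * G ∈ trigPolySndDegreeLE (N + M) :=
  trigPolySndDegreeLE_mul_le N M (Submodule.mul_mem_mul hF hG)

lemma pow_mem_trigPolySndDegreeLE (hF : F ∈ trigPolySndDegreeLE N) (n : ℕ) :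
    F ^ n ∈ trigPolySndDegreeLE (n * N) := by
  induction n with
  | zero => simpa [← fourierMode_zero] using fourierMode_mem_trigPolySndDegreeLE (m := 0) le_rfl
  | succ n ih =>
    rw [pow_succ, Nat.succ_mul]
    exact mul_mem_trigPolySndDegreeLE ih hF

lemma continuous_of_mem_trigPolySndDegreeLE (hF : F ∈ trigPolySndDegreeLE N) : Continuous F := by
  induction hF using Submodule.span_induction with
  | mem _ h => obtain ⟨m, -, rfl⟩ := h; fun_prop
  | zero => exact continuous_const
  | add _ _ _ _ hF hG => exact hF.add hG
  | smul c _ _ hF => exact hF.const_smul c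

end Membership

lemma ofReal_cos_mem_trigPolySndDegreeLE {N : ℕ} {m : ℤ × ℤ} (hm : |m.2| ≤ N) :
    (fun θ : ℝ × ℝ => (Real.cos (m.1 * θ.1 + m.2 * θ.2) : ℂ)) ∈ trigPolySndDegreeLE N := by
  have hexp : (fun θ : ℝ × ℝ => (Real.cos (m.1 * θ.1 + m.2 * θ.2) : ℂ)) =
      (2 : ℂ)⁻¹ • (fourierMode m + fourierMode (-m)) := by
    ext θ
    simp only [fourierMode, ofReal_cos, Pi.smul_apply, Pi.add_apply, Prod.fst_neg, Prod.snd_neg,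
      Int.cast_neg, smul_eq_mul, Complex.cos]
    push_cast
    ring_nf
  rw [hexp]
  exact Submodule.smul_mem _ _ (add_mem (fourierMode_mem_trigPolySndDegreeLE hm)
    (fourierMode_mem_trigPolySndDegreeLE (by simpa using hm)))

lemma ofReal_sin_mem_trigPolySndDegreeLE {N : ℕ} {m : ℤ × ℤ} (hm : |m.2| ≤ N) :
    (fun θ : ℝ × ℝ => (Real.sin (m.1 * θ.1 + m.2 * θ.2) : ℂ)) ∈ trigPolySndDegreeLE N := by
  have hexp : (fun θ : ℝ × ℝ => (Real.sin (m.1 * θ.1 + m.2 * θ.2) : ℂ)) =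
      (I / 2) • (fourierMode (-m) - fourierMode m) := by
    ext θ
    simp only [fourierMode, ofReal_sin, Pi.smul_apply, Pi.sub_apply, Prod.fst_neg, Prod.snd_neg,
      Int.cast_neg, smul_eq_mul, Complex.sin]
    push_cast
    ring_nf
  rw [hexp]
  exact Submodule.smul_mem _ _ (sub_mem (fourierMode_mem_trigPolySndDegreeLE (by simpa using hm))
    (fourierMode_mem_trigPolySndDegreeLE hm))

lemma ofReal_eval_mem_trigPolySndDegreeLE {N : ℕ} {f : MvPolynomial (Fin 4) ℝ}
    (hf : f.totalDegree ≤ N) :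
    (fun θ : ℝ × ℝ => (eval ![Real.cos θ.1, Real.sin θ.1, Real.cos θ.2, Real.sin θ.2] f : ℂ)) ∈
      trigPolySndDegreeLE N := by
  have hcos₁ : (fun θ : ℝ × ℝ => (Real.cos θ.1 : ℂ)) ∈ trigPolySndDegreeLE 0 := by
    simpa using ofReal_cos_mem_trigPolySndDegreeLE (m := (1, 0)) (N := 0) (by simp)
  have hsin₁ : (fun θ : ℝ × ℝ => (Real.sin θ.1 : ℂ)) ∈ trigPolySndDegreeLE 0 := by
    simpa using ofReal_sin_mem_trigPolySndDegreeLE (m := (1, 0)) (N := 0) (by simp)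
  have hcos₂ : (fun θ : ℝ × ℝ => (Real.cos θ.2 : ℂ)) ∈ trigPolySndDegreeLE 1 := by
    simpa using ofReal_cos_mem_trigPolySndDegreeLE (m := (0, 1)) (N := 1) (by simp)
  have hsin₂ : (fun θ : ℝ × ℝ => (Real.sin θ.2 : ℂ)) ∈ trigPolySndDegreeLE 1 := by
    simpa using ofReal_sin_mem_trigPolySndDegreeLE (m := (0, 1)) (N := 1) (by simp)
  have hsum : (fun θ : ℝ × ℝ =>
      (eval ![Real.cos θ.1, Real.sin θ.1, Real.cos θ.2, Real.sin θ.2] f : ℂ)) =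
      ∑ d ∈ f.support, ((coeff d f : ℝ) : ℂ) • ((fun θ : ℝ × ℝ => (Real.cos θ.1 : ℂ)) ^ d 0 *
        (fun θ : ℝ × ℝ => (Real.sin θ.1 : ℂ)) ^ d 1 * (fun θ : ℝ × ℝ => (Real.cos θ.2 : ℂ)) ^ d 2 *
        (fun θ : ℝ × ℝ => (Real.sin θ.2 : ℂ)) ^ d 3) := by
    ext θ
    simp [eval_eq', Fin.prod_univ_four, Finset.sum_apply, mul_assoc]
  rw [hsum]
  refine Submodule.sum_mem _ fun d hd => Submodule.smul_mem _ _ ?_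
  have hdeg : d 2 + d 3 ≤ N := by
    have := le_totalDegree hd
    rw [Finsupp.sum_fintype _ _ fun _ => rfl, Fin.sum_univ_four] at this
    omega
  refine trigPolySndDegreeLE_mono (by simpa using hdeg) <| mul_mem_trigPolySndDegreeLE
    (mul_mem_trigPolySndDegreeLE (mul_mem_trigPolySndDegreeLE
      (pow_mem_trigPolySndDegreeLE hcos₁ _) (pow_mem_trigPolySndDegreeLE hsin₁ _))
      (pow_mem_trigPolySndDegreeLE hcos₂ _)) (pow_mem_trigPolySndDegreeLE hsin₂ _)

lemma integral_exp_int_mul_I (n : ℤ) :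
    ∫ x in (0 : ℝ)..2 * π, exp (n * x * I) = if n = 0 then (2 * π : ℂ) else 0 := by
  split_ifs with hn
  · simp [hn]
  have hc : (n : ℂ) * I ≠ 0 := by simp [hn]
  simp_rw [mul_right_comm _ _ I]
  rw [integral_exp_mul_complex hc]
  have h2π : (n : ℂ) * I * ↑(2 * π) = n * (2 * π * I) := by push_cast; ring
  rw [h2π, exp_int_mul_two_pi_mul_I]
  simp

lemma integral_fourierMode_winding (k : ℕ) (m : ℤ × ℤ) :
    ∫ s in (0 : ℝ)..1, fourierMode m (2 * π * k * s, 2 * π * s) =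
      if k * m.1 + m.2 = 0 then 1 else 0 := by
  have hmode : ∀ s : ℝ, fourierMode m (2 * π * k * s, 2 * π * s) =
      exp (((k * m.1 + m.2 : ℤ) : ℂ) * ↑(2 * π * s) * I) := by
    intro s
    simp only [fourierMode]
    push_cast
    ring_nf
  simp_rw [hmode]
  rw [integral_comp_mul_left (fun x : ℝ => exp (((k * m.1 + m.2 : ℤ) : ℂ) * x * I))
    (by positivity : 2 * π ≠ 0), mul_zero, mul_one, integral_exp_int_mul_I]
  split_ifs
  · rw [real_smul]
    push_cast
    field_simp
  · simp

lemma integral_integral_fourierMode (m : ℤ × ℤ) :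
    ∫ θ₁ in (0 : ℝ)..2 * π, ∫ θ₂ in (0 : ℝ)..2 * π, fourierMode m (θ₁, θ₂) =
      if m = 0 then (2 * π : ℂ) ^ 2 else 0 := by
  simp only [fourierMode, add_mul, Complex.exp_add, integral_const_mul, integral_mul_const,
    integral_exp_int_mul_I, Prod.ext_iff]
  split_ifs <;> simp_all
  ring

lemma eq_zero_of_natCast_mul_add_eq_zero {k : ℕ} {a b : ℤ} (hb : |b| < k)
    (h : k * a + b = 0) : a = 0 ∧ b = 0 := by
  obtain rfl : a = 0 := by
    by_contra ha
    have : (k : ℤ) ≤ |b| := by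
      rw [show b = -(k * a) by linarith, abs_neg, abs_mul, Nat.abs_cast]
      exact le_mul_of_one_le_right (by positivity) (Int.one_le_abs ha)
    omega
  simpa using h

theorem integral_winding_eq_torus_average {N k : ℕ} (hk : N < k) {F : ℝ × ℝ → ℂ}
    (hF : F ∈ trigPolySndDegreeLE N) :
    ∫ s in (0 : ℝ)..1, F (2 * π * k * s, 2 * π * s) =
      ((2 * π : ℂ) ^ 2)⁻¹ * ∫ θ₁ in (0 : ℝ)..2 * π, ∫ θ₂ in (0 : ℝ)..2 * π, F (θ₁, θ₂) := by
  induction hF using Submodule.span_induction with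
  | mem _ h =>
    obtain ⟨m, hm, rfl⟩ := h
    rw [integral_fourierMode_winding, integral_integral_fourierMode]
    by_cases h0 : m = 0
    · simp [h0, pi_ne_zero]
    · have hfreq : (k : ℤ) * m.1 + m.2 ≠ 0 := fun h => h0 <| Prod.ext_iff.2 <|
        eq_zero_of_natCast_mul_add_eq_zero (hm.trans_lt (by exact_mod_cast hk)) h
      simp [h0, hfreq]
  | zero => simp
  | add F G hF hG ihF ihG =>
    have hFc := continuous_of_mem_trigPolySndDegreeLE hF
    have hGc := continuous_of_mem_trigPolySndDegreeLE hG
    have hinner (θ₁ : ℝ) : ∫ θ₂ in (0 : ℝ)..2 * π, F (θ₁, θ₂) + G (θ₁, θ₂) =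
        (∫ θ₂ in (0 : ℝ)..2 * π, F (θ₁, θ₂)) + ∫ θ₂ in (0 : ℝ)..2 * π, G (θ₁, θ₂) :=
      integral_add (Continuous.intervalIntegrable (by fun_prop) _ _)
        (Continuous.intervalIntegrable (by fun_prop) _ _)
    simp only [Pi.add_apply]
    rw [integral_add (Continuous.intervalIntegrable (by fun_prop) _ _)
        (Continuous.intervalIntegrable (by fun_prop) _ _), ihF, ihG,
      integral_congr fun θ₁ _ => hinner θ₁,
      integral_add (Continuous.intervalIntegrable (by fun_prop) _ _)
        (Continuous.intervalIntegrable (by fun_prop) _ _), mul_add]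
  | smul c F _ ih =>
    simp only [Pi.smul_apply, smul_eq_mul, integral_const_mul, ih]
    ring

theorem integral_eval_winding_eq_torus_average {N k : ℕ} (hk : N < k)
    {f : MvPolynomial (Fin 4) ℝ} (hf : f.totalDegree ≤ N) :
    ∫ s in (0 : ℝ)..1, eval ![Real.cos (2 * π * k * s), Real.sin (2 * π * k * s),
        Real.cos (2 * π * s), Real.sin (2 * π * s)] f =
      1 / (2 * π) ^ 2 * ∫ θ₁ in (0 : ℝ)..2 * π, ∫ θ₂ in (0 : ℝ)..2 * π,
        eval ![Real.cos θ₁, Real.sin θ₁, Real.cos θ₂, Real.sin θ₂] f := by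
  apply ofReal_injective
  simpa [← integral_ofReal] using
    integral_winding_eq_torus_average hk (ofReal_eval_mem_trigPolySndDegreeLE hf)

lemma hasDerivAt_torusCurve (t : ℕ) (s : ℝ) :
    HasDerivAt (torusCurve t)
      ((WithLp.equiv 2 (Fin 4 → ℝ)).symm
        ![-Real.sin (2 * π * (t + 1) * s) * (2 * π * (t + 1)),
          Real.cos (2 * π * (t + 1) * s) * (2 * π * (t + 1)),
          -Real.sin (2 * π * s) * (2 * π), Real.cos (2 * π * s) * (2 * π)]) s := by
  have hlin (c : ℝ) : HasDerivAt (fun s : ℝ => c * s) c s := by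
    simpa using (hasDerivAt_id s).const_mul c
  have hcoord : HasDerivAt (fun s : ℝ => ![Real.cos (2 * π * (t + 1) * s),
      Real.sin (2 * π * (t + 1) * s), Real.cos (2 * π * s), Real.sin (2 * π * s)])
      ![-Real.sin (2 * π * (t + 1) * s) * (2 * π * (t + 1)),
        Real.cos (2 * π * (t + 1) * s) * (2 * π * (t + 1)),
        -Real.sin (2 * π * s) * (2 * π), Real.cos (2 * π * s) * (2 * π)] s := by
    rw [hasDerivAt_pi]
    intro i
    fin_cases i
    exacts [(hlin _).cos, (hlin _).sin, (hlin _).cos, (hlin _).sin]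
  exact (PiLp.continuousLinearEquiv 2 ℝ fun _ : Fin 4 => ℝ).symm.hasFDerivAt.comp_hasDerivAt s
    hcoord

lemma norm_deriv_torusCurve (t : ℕ) (s : ℝ) :
    ‖deriv (torusCurve t) s‖ = 2 * π * √((t + 1) ^ 2 + 1) := by
  have hspeed : 2 * π * √((t + 1) ^ 2 + 1) = √((2 * π) ^ 2 * ((t + 1) ^ 2 + 1)) := by
    rw [sqrt_mul (sq_nonneg _), sqrt_sq (by positivity)]
  rw [(hasDerivAt_torusCurve t s).deriv, EuclideanSpace.norm_eq, Fin.sum_univ_four, hspeed]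
  congr 1
  simp only [WithLp.equiv_symm_apply, PiLp.toLp_apply, Matrix.cons_val, norm_eq_abs, sq_abs]
  nlinarith [Real.sin_sq_add_cos_sq (2 * π * (t + 1) * s), Real.sin_sq_add_cos_sq (2 * π * s)]

/-- `γ_t` is a `t`-design curve on the Clifford torus: the normalized line
integral of every polynomial on `ℝ⁴` of degree at most `t` equals its average over
`S¹ × S¹` with respect to the product of arc-length measures; moreover
`ℓ(γ_t) = 2π√((t+1)² + 1)`. -/
theorem torusCurve_is_design (t : ℕ) :
    (∀ f : MvPolynomial (Fin 4) ℝ, f.totalDegree ≤ t →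
      (∫ s in (0:ℝ)..1, ‖deriv (torusCurve t) s‖)⁻¹ *
          ∫ s in (0:ℝ)..1, eval (WithLp.equiv 2 (Fin 4 → ℝ) (torusCurve t s)) f *
            ‖deriv (torusCurve t) s‖ =
        (1 / (2 * π) ^ 2) * ∫ θ₁ in (0:ℝ)..(2 * π), ∫ θ₂ in (0:ℝ)..(2 * π),
          eval ![Real.cos θ₁, Real.sin θ₁, Real.cos θ₂, Real.sin θ₂] f) ∧
    (∫ s in (0:ℝ)..1, ‖deriv (torusCurve t) s‖) =
      2 * π * Real.sqrt ((t + 1) ^ 2 + 1) := by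
  have hlength :
      ∫ s in (0:ℝ)..1, ‖deriv (torusCurve t) s‖ = 2 * π * √((t + 1) ^ 2 + 1) := by
    simp [norm_deriv_torusCurve]
  refine ⟨fun f hf => ?_, hlength⟩
  have hspeed : 2 * π * √(((t : ℝ) + 1) ^ 2 + 1) ≠ 0 := by positivity
  have hcurve := integral_eval_winding_eq_torus_average (k := t + 1) (Nat.lt_succ_self t) hf
  push_cast at hcurve
  rw [hlength]
  simp only [norm_deriv_torusCurve, integral_mul_const, torusCurve, Equiv.apply_symm_apply]
  rw [mul_comm _ (2 * π * _), inv_mul_cancel_left₀ hspeed, hcurve]
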